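/- For all integers n ≥ 0 and i ≥ 1, ā_{2i}(4n + 3) ≡ 0 (mod 4). -/

import Mathlib

/-- `fk k` is the infinite product `∏_{n ≥ 1} (1 - q^{k n})` in `ℤ[[q]]`, defined
coefficientwise via stable partial products. -/
noncomputable def fk (k : ℕ) : PowerSeries ℤ :=
  PowerSeries.mk fun n =>
    PowerSeries.coeff (R := ℤ) n
      (∏ m ∈ Finset.Icc 1 (n + 1), (1 - (PowerSeries.X : PowerSeries ℤ) ^ (k * m)))

/-- `a : ℕ → ℕ` is the generalized overcubic partition function `ā_c`, i.e.
`(∑_{n≥0} ā_c(n) q^n) · f_1^2 · f_2^{2c} = f_2^3 · f_4^{c-1}` in `ℤ[[q]]`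
(equivalently `∑_{n≥0} ā_c(n) q^n = f_4^{c-1}/(f_1^2 f_2^{2c-3})`). -/
def IsGenOvercubic (c : ℕ) (a : ℕ → ℕ) : Prop :=
  (PowerSeries.mk fun n => (a n : ℤ)) * (fk 1) ^ 2 * (fk 2) ^ (2 * c) =
    (fk 2) ^ 3 * (fk 4) ^ (c - 1)

/-!
Modulo 4 one has `(1 - x)² = (1 - x²)(1 + 2y)` whenever `(1 - x) y = x`, and a product of factors
`1 + 2yₘ` collapses to `1 + 2 ∑ yₘ`. With `x = qᵐ` this gives `f₁² ≡ f₂ (1 + 2D)`, where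
`D = ∑ₘ qᵐ/(1 - qᵐ) = ∑ d(n) qⁿ` is the divisor-count series. Modulo 2, `f₄ ≡ f₂²`, so
`f₄^(2i-1) = f₂^(4i-2) + 2E` with `E` a series in `q²`. Inserting both into the defining relation and
using `(1 + 2D)² ≡ 1` yields `∑ ā_{2i}(n) qⁿ ≡ 1 + 2D + 2 f₂³ E / f₂^(4i+1) (mod 4)`. The last term
is again a series in `q²`, and `d(4n + 3)` is even because `4n + 3` is not a square.
-/

open PowerSeries Finset

theorem Finset.prod_one_add_mul_of_sq_eq_zero {R ι : Type*} [CommRing R] (s : Finset ι) {ε : R}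
    (hε : ε ^ 2 = 0) (a : ι → R) : ∏ i ∈ s, (1 + ε * a i) = 1 + ε * ∑ i ∈ s, a i := by
  classical
  induction s using Finset.induction_on with
  | empty => simp
  | insert j s hj ih =>
    rw [prod_insert hj, sum_insert hj, ih]
    linear_combination a j * (∑ i ∈ s, a i) * hε

theorem one_sub_sq_eq_of_mul_eq {R : Type*} [CommRing R] (h4 : (4 : R) = 0) {x y : R}
    (hxy : (1 - x) * y = x) : (1 - x) ^ 2 = (1 - x ^ 2) * (1 + 2 * y) := by
  linear_combination (-2 * (1 + x)) * hxy - x * h4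

theorem RingHom.map_eq_of_mul_eq_one {R : Type*} [CommRing R] (σ : R →+* R) {p w : R}
    (hp : σ p = p) (hw : p * w = 1) : σ w = w := by
  calc σ w = σ w * (p * w) := by rw [hw, mul_one]
    _ = σ (p * w) * w := by rw [map_mul, hp]; ring
    _ = w := by rw [hw, map_one, one_mul]

theorem Nat.not_isSquare_of_mod_four_eq_three {n : ℕ} (hn : n % 4 = 3) : ¬IsSquare n := by
  rintro ⟨r, rfl⟩
  have := Nat.mod_lt r (show 0 < 4 by norm_num)
  rw [Nat.mul_mod] at hn
  interval_cases r % 4 <;> simp_all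

theorem Nat.even_card_divisors {n : ℕ} (hn : ¬IsSquare n) : Even n.divisors.card := by
  rw [← ZMod.natCast_eq_zero_iff_even, card_eq_sum_ones, Nat.cast_sum]
  refine sum_involution (fun d _ => n / d) (fun _ _ => by decide) (fun d hd _ h => hn ?_)
    (fun d hd => ?_) (fun d hd => ?_)
  · exact ⟨d, by rw [Nat.mem_divisors] at hd; nth_rw 1 [← Nat.div_mul_cancel hd.1, h]⟩
  · exact Nat.mem_divisors.2 ⟨Nat.div_dvd_of_dvd (Nat.mem_divisors.1 hd).1, (Nat.mem_divisors.1 hd).2⟩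
  · exact Nat.div_div_self (Nat.mem_divisors.1 hd).1 (Nat.mem_divisors.1 hd).2

namespace PowerSeries

variable {R : Type*} [CommRing R]

theorem ofNat_eq_zero {n : ℕ} [n.AtLeastTwo] (h : (OfNat.ofNat n : R) = 0) :
    (OfNat.ofNat n : R⟦X⟧) = 0 := by
  rw [← map_ofNat C, h, map_zero]

theorem mk_eq_of_X_pow_dvd_sub {F G : R⟦X⟧} {N : ℕ} (h : X ^ (N + 1) ∣ F - G) :
    Ideal.Quotient.mk (Ideal.span {X ^ (N + 1)}) F =
      Ideal.Quotient.mk (Ideal.span {X ^ (N + 1)}) G :=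
  Ideal.Quotient.eq.2 (Ideal.mem_span_singleton.2 h)

theorem eq_of_forall_mk_eq {F G : R⟦X⟧}
    (h : ∀ N, Ideal.Quotient.mk (Ideal.span {X ^ (N + 1)}) F =
      Ideal.Quotient.mk (Ideal.span {X ^ (N + 1)}) G) : F = G := by
  ext n
  rw [← sub_eq_zero, ← map_sub]
  exact X_pow_dvd_iff.1 (Ideal.mem_span_singleton.1 (Ideal.Quotient.eq.1 (h n))) n n.lt_succ_self

theorem coeff_eq_zero_of_evalNegHom_eq {F : ℤ⟦X⟧} (hF : evalNegHom F = F) {n : ℕ} (hn : Odd n) :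
    coeff n F = 0 := by
  have h := congrArg (coeff n) hF
  rw [evalNegHom, coeff_rescale, hn.neg_one_pow, neg_one_mul] at h
  omega

theorem exists_eq_two_mul_of_map_eq_zero {F : ℤ⟦X⟧}
    (hF : map (Int.castRingHom (ZMod 2)) F = 0) : ∃ E, F = 2 * E := by
  refine ⟨mk fun n => coeff n F / 2, ?_⟩
  ext n
  have h2 : (2 : ℤ) ∣ coeff n F := by
    simpa [ZMod.intCast_zmod_eq_zero_iff_dvd] using congrArg (coeff n) hF
  rw [show (2 : ℤ⟦X⟧) = C 2 from rfl, coeff_C_mul, coeff_mk, Int.mul_ediv_cancel' h2]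

end PowerSeries

variable {R : Type*} [CommRing R]

variable (R) in
noncomputable def fkPartial (k N : ℕ) : R⟦X⟧ :=
  ∏ m ∈ Icc 1 N, (1 - X ^ (k * m))

theorem map_fkPartial {S : Type*} [CommRing S] (f : R →+* S) (k N : ℕ) :
    map f (fkPartial R k N) = fkPartial S k N := by
  simp [fkPartial, map_prod]

theorem fkPartial_succ (k N : ℕ) :
    fkPartial R k (N + 1) = fkPartial R k N * (1 - X ^ (k * (N + 1))) :=
  prod_Icc_succ_top (by omega) _

theorem X_pow_dvd_fkPartial_sub {k N M : ℕ} (hk : 0 < k) (hNM : N ≤ M) :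
    X ^ (N + 1) ∣ fkPartial R k M - fkPartial R k N := by
  induction M, hNM using Nat.le_induction with
  | base => simp
  | succ M _ ih =>
    have hX : (X : R⟦X⟧) ^ (N + 1) ∣ X ^ (k * (M + 1)) := pow_dvd_pow X (by nlinarith)
    rw [fkPartial_succ, show ∀ a b c : R⟦X⟧, a * (1 - b) - c = (a - c) - a * b by intros; ring]
    exact dvd_sub ih (dvd_mul_of_dvd_right hX _)

theorem coeff_fk (k n : ℕ) : coeff n (fk k) = coeff n (fkPartial ℤ k (n + 1)) := by
  simp [fk, fkPartial]

theorem X_pow_dvd_map_fk_sub (f : ℤ →+* R) {k : ℕ} (hk : 0 < k) (N : ℕ) :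
    X ^ (N + 1) ∣ map f (fk k) - fkPartial R k N := by
  rw [← map_fkPartial f, ← map_sub, ← map_X f, ← map_pow]
  refine map_dvd _ (X_pow_dvd_iff.2 fun m hm => ?_)
  have h1 := X_pow_dvd_iff.1 (X_pow_dvd_fkPartial_sub (R := ℤ) hk (Nat.le_succ m)) m m.lt_succ_self
  have h2 := X_pow_dvd_iff.1 (X_pow_dvd_fkPartial_sub (R := ℤ) hk (Nat.le_of_lt_succ hm)) m
    m.lt_succ_self
  rw [map_sub, coeff_fk]
  rw [map_sub] at h1 h2
  linarith

theorem mk_map_fk (f : ℤ →+* R) {k : ℕ} (hk : 0 < k) (N : ℕ) :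
    Ideal.Quotient.mk (Ideal.span {X ^ (N + 1)}) (map f (fk k)) =
      Ideal.Quotient.mk (Ideal.span {X ^ (N + 1)}) (fkPartial R k N) :=
  mk_eq_of_X_pow_dvd_sub (X_pow_dvd_map_fk_sub f hk N)

theorem constantCoeff_fk {k : ℕ} (hk : 0 < k) : constantCoeff (fk k) = 1 := by
  rw [← coeff_zero_eq_constantCoeff_apply, coeff_fk]
  simp [fkPartial, hk.ne']

theorem evalNegHom_fkPartial {k : ℕ} (hk : Even k) (N : ℕ) :
    evalNegHom (fkPartial R k N) = fkPartial R k N := by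
  simp [fkPartial, map_prod, neg_pow, (hk.mul_right _).neg_one_pow]

theorem evalNegHom_fk {k : ℕ} (hk : Even k) : evalNegHom (fk k) = fk k := by
  ext n
  rw [evalNegHom, coeff_rescale, coeff_fk, ← coeff_rescale, ← evalNegHom, evalNegHom_fkPartial hk]

theorem fkPartial_sq (h2 : (2 : R) = 0) (k N : ℕ) :
    fkPartial R k N ^ 2 = fkPartial R (2 * k) N := by
  have h2' : (2 : R⟦X⟧) = 0 := ofNat_eq_zero h2
  rw [fkPartial, fkPartial, ← prod_pow]
  refine prod_congr rfl fun m _ => ?_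
  rw [show 2 * k * m = k * m + k * m by ring, pow_add]
  linear_combination (X ^ (k * m) * X ^ (k * m) - X ^ (k * m) : R⟦X⟧) * h2'

theorem map_fk_two_mul (h2 : (2 : R) = 0) {k : ℕ} (hk : 0 < k) :
    map (Int.castRingHom R) (fk (2 * k)) = map (Int.castRingHom R) (fk k) ^ 2 :=
  eq_of_forall_mk_eq fun N => by
    rw [map_pow, mk_map_fk _ (by omega), mk_map_fk _ hk, ← map_pow, fkPartial_sq h2]

theorem exists_fk_four_pow_eq (j : ℕ) :
    ∃ E, fk 4 ^ j = fk 2 ^ (2 * j) + 2 * E ∧ evalNegHom E = E := by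
  obtain ⟨E, hE⟩ : ∃ E, fk 4 ^ j - fk 2 ^ (2 * j) = 2 * E := by
    refine exists_eq_two_mul_of_map_eq_zero ?_
    rw [map_sub, map_pow, map_pow, pow_mul, ← map_fk_two_mul (R := ZMod 2) (by decide) two_pos]
    exact sub_self _
  have h2 : (2 : ℤ⟦X⟧) ≠ 0 := fun h => by simpa [map_ofNat] using congrArg constantCoeff h
  refine ⟨E, by linear_combination hE, mul_left_cancel₀ h2 ?_⟩
  rw [← hE, ← map_ofNat evalNegHom 2, ← map_mul, ← hE, map_sub, map_pow, map_pow,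
    evalNegHom_fk (by decide), evalNegHom_fk (by decide)]

variable (R) in
noncomputable def multiplesSeries (m : ℕ) : R⟦X⟧ :=
  mk fun n => if n ≠ 0 ∧ m ∣ n then 1 else 0

theorem one_sub_X_pow_mul_multiplesSeries {m : ℕ} (hm : 0 < m) :
    (1 - X ^ m) * multiplesSeries R m = X ^ m := by
  ext n
  rw [sub_mul, one_mul, map_sub, mul_comm, coeff_mul_X_pow', coeff_X_pow, multiplesSeries,
    coeff_mk]
  rcases lt_trichotomy n m with h | rfl | h
  · simp only [h.ne, not_le.2 h, if_false, sub_zero, ite_eq_right_iff]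
    exact fun hn => absurd (Nat.le_of_dvd (Nat.pos_of_ne_zero hn.1) hn.2) (not_le.2 h)
  · simp [hm.ne']
  · obtain ⟨d, rfl⟩ := Nat.exists_eq_add_of_le h.le
    simp [Nat.dvd_add_self_left, show d ≠ 0 by omega]

variable (R) in
noncomputable def divisorSeries : R⟦X⟧ :=
  mk fun n => (n.divisors.card : R)

theorem X_pow_dvd_divisorSeries_sub (N : ℕ) :
    X ^ (N + 1) ∣ divisorSeries R - ∑ m ∈ Icc 1 N, multiplesSeries R m := by
  refine X_pow_dvd_iff.2 fun n hn => ?_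
  have hdiv : {m ∈ Icc 1 N | n ≠ 0 ∧ m ∣ n} = n.divisors := by
    ext m
    simp only [mem_filter, mem_Icc, Nat.mem_divisors]
    constructor
    · exact fun h => ⟨h.2.2, h.2.1⟩
    · intro ⟨hmn, hn0⟩
      have := Nat.le_of_dvd (Nat.pos_of_ne_zero hn0) hmn
      have := Nat.pos_of_dvd_of_pos hmn (Nat.pos_of_ne_zero hn0)
      exact ⟨⟨by omega, by omega⟩, hn0, hmn⟩
  simp [divisorSeries, multiplesSeries, map_sum, sum_boole, hdiv]

theorem fkPartial_one_sq (h4 : (4 : R) = 0) (N : ℕ) :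
    fkPartial R 1 N ^ 2 = fkPartial R 2 N * (1 + 2 * ∑ m ∈ Icc 1 N, multiplesSeries R m) := by
  have h4' : (4 : R⟦X⟧) = 0 := ofNat_eq_zero h4
  have hε : (2 : R⟦X⟧) ^ 2 = 0 := by linear_combination h4'
  rw [fkPartial, fkPartial, ← prod_one_add_mul_of_sq_eq_zero _ hε, ← prod_pow, ← prod_mul_distrib]
  refine prod_congr rfl fun m hm => ?_
  rw [one_mul, mul_comm 2 m, pow_mul]
  exact one_sub_sq_eq_of_mul_eq h4' (one_sub_X_pow_mul_multiplesSeries (by simp at hm; omega))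

theorem map_fk_one_sq (h4 : (4 : R) = 0) :
    map (Int.castRingHom R) (fk 1) ^ 2 =
      map (Int.castRingHom R) (fk 2) * (1 + 2 * divisorSeries R) :=
  eq_of_forall_mk_eq fun N => by
    have hD := mk_eq_of_X_pow_dvd_sub (X_pow_dvd_divisorSeries_sub (R := R) N)
    simp only [map_pow, map_mul, map_add, map_one, map_ofNat, mk_map_fk _ one_pos,
      mk_map_fk _ two_pos, hD]
    rw [← map_pow, fkPartial_one_sq h4]
    simp only [map_mul, map_add, map_one, map_ofNat]

theorem IsGenOvercubic.exists_map_eq {i : ℕ} (hi : 1 ≤ i) {ab : ℕ → ℕ}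
    (hab : IsGenOvercubic (2 * i) ab) :
    ∃ G : ℤ⟦X⟧, evalNegHom G = G ∧
      map (Int.castRingHom (ZMod 4)) (mk fun n => (ab n : ℤ)) =
        1 + 2 * divisorSeries (ZMod 4) + 2 * map (Int.castRingHom (ZMod 4)) G := by
  unfold IsGenOvercubic at hab
  set φ := map (Int.castRingHom (ZMod 4))
  set A : ℤ⟦X⟧ := mk fun n => (ab n : ℤ)
  set P := fk 2 ^ (4 * i + 1)
  obtain ⟨E, hE, hE_even⟩ := exists_fk_four_pow_eq (2 * i - 1)
  have hrel : A * fk 1 ^ 2 * fk 2 ^ (2 * (2 * i)) = P + 2 * (fk 2 ^ 3 * E) := by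
    have hexp : fk 2 ^ 3 * fk 2 ^ (2 * (2 * i - 1)) = P := by rw [← pow_add]; congr 1; omega
    linear_combination hab + fk 2 ^ 3 * hE + hexp
  obtain ⟨w, hw⟩ : ∃ w, P * w = 1 :=
    ⟨invOfUnit P 1, mul_invOfUnit _ _ (by simp [P, constantCoeff_fk])⟩
  refine ⟨fk 2 ^ 3 * E * w, ?_, ?_⟩
  · have hP : evalNegHom P = P := by rw [map_pow, evalNegHom_fk even_two]
    rw [map_mul, map_mul, map_pow, evalNegHom_fk even_two, hE_even,
      evalNegHom.map_eq_of_mul_eq_one hP hw]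
  · have h4 : (4 : (ZMod 4)⟦X⟧) = 0 := ofNat_eq_zero (by decide)
    have h := congrArg φ hrel
    have hw' := congrArg φ hw
    simp only [P, map_mul, map_pow, map_add, map_ofNat, map_one] at h hw' ⊢
    rw [map_fk_one_sq (by decide)] at h
    set D := divisorSeries (ZMod 4)
    -- multiply `h` by `(1 + 2D) φ w`; then `(1 + 2D)² = 1` since `4 = 0`
    linear_combination ((1 + 2 * D) * φ w) * h - (φ A * (1 + 2 * D) ^ 2 - (1 + 2 * D)) * hw' -
      (φ A * D + φ A * D ^ 2 - φ (fk 2) ^ 3 * φ E * D * φ w) * h4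

theorem stmt_4 (i : ℕ) (hi : 1 ≤ i) (ab : ℕ → ℕ) (hab : IsGenOvercubic (2 * i) ab)
    (n : ℕ) :
    ab (4 * n + 3) % 4 = 0 := by
  obtain ⟨G, hG_even, hA⟩ := hab.exists_map_eq hi
  have hG := coeff_eq_zero_of_evalNegHom_eq hG_even (n := 4 * n + 3) ⟨2 * n + 1, by ring⟩
  obtain ⟨d, hd⟩ :=
    Nat.even_card_divisors (Nat.not_isSquare_of_mod_four_eq_three (n := 4 * n + 3) (by omega))
  have hcoeff := congrArg (coeff (4 * n + 3)) hA
  simp only [two_mul, map_add, coeff_map, hG, map_zero, add_zero, coeff_one, coeff_mk,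
    divisorSeries, eq_intCast, Int.cast_natCast, hd, if_neg (show 4 * n + 3 ≠ 0 by omega)]
    at hcoeff
  have hmod : ((ab (4 * n + 3) : ℕ) : ZMod 4) = ((4 * d : ℕ) : ZMod 4) := by
    push_cast at hcoeff ⊢
    linear_combination hcoeff
  simpa using (ZMod.natCast_eq_natCast_iff' _ _ _).1 hmod
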